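/- Let n be a positive integer, A_n the n×n tridiagonal matrix with [A_n]_{k,k} = −k², [A_n]_{k,k−1} = k(k+n)/2, [A_n]_{k,k+1} = k(k−n)/2, B_n the diagonal matrix with [B_n]_{kk} = k, f_n = (1,…,1)^T, and e_n = (1,0,…,0)^T. Then for every integer 1 ≤ ℓ ≤ 2n, A_n B_n^ℓ f_n = ∑_{j=0}^{⌊(ℓ−1)/2⌋} [C(ℓ, 2j+2) − n·C(ℓ, 2j+1)] B_n^{ℓ−2j} f_n. Moreover A_n f_n = −((n+1)/2)·e_n. -/

import Mathlib

open Finset Matrix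

/-- The tridiagonal matrix `A_n` with `[A_n]_{k,k} = -k²`, `[A_n]_{k,k-1} = k(k+n)/2`,
`[A_n]_{k,k+1} = k(k-n)/2`, indices `1,…,n` realized on `Fin n` via `i ↦ i+1`. -/
noncomputable def Amat (n : ℕ) : Matrix (Fin n) (Fin n) ℝ :=
  fun i j =>
    if (i : ℕ) = (j : ℕ) then -(((i : ℕ) + 1 : ℝ) ^ 2)
    else if (i : ℕ) = (j : ℕ) + 1 then (((i : ℕ) + 1 : ℝ) * (((i : ℕ) + 1) + n)) / 2
    else if (j : ℕ) = (i : ℕ) + 1 then (((i : ℕ) + 1 : ℝ) * (((i : ℕ) + 1 : ℝ) - n)) / 2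
    else 0

/-- Diagonal matrix `B_n` with `[B_n]_{kk} = k`. -/
noncomputable def Bmat (n : ℕ) : Matrix (Fin n) (Fin n) ℝ :=
  Matrix.diagonal (fun k : Fin n => ((k : ℕ) + 1 : ℝ))

/-- All-ones vector `f_n`. -/
noncomputable def fvec (n : ℕ) : Fin n → ℝ := fun _ => 1

/-- First coordinate vector `e_n = (1,0,…,0)`. -/
noncomputable def evec (n : ℕ) : Fin n → ℝ := fun k => if (k : ℕ) = 0 then 1 else 0

/-!
Extend a vector indexed by `k = 1, …, n` by a zero entry at `k = 0`. Then row `k` of `A_n v` is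
`k(k+n)/2 · v_{k-1} - k² v_k + k(k-n)/2 · v_{k+1}`, and the value `v_{n+1}` is irrelevant because
its coefficient vanishes at `k = n`. For `v = B_n^ℓ f_n`, i.e. `v_k = k^ℓ`, the row is a polynomial
in `k`; expanding `(k ± 1)^ℓ` binomially, the even-index terms of the expansion come with `k²` and
the odd-index ones with `-n k`, and collecting them by the resulting power of `k` gives the claimed
combination of the vectors `B_n^{ℓ-2j} f_n`. For `v = f_n` every row vanishes except the first,
which has no lower neighbour.
-/

theorem Finset.sum_range_two_mul {M : Type*} [AddCommMonoid M] (f : ℕ → M) (N : ℕ) :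
    ∑ m ∈ range (2 * N), f m = ∑ j ∈ range N, (f (2 * j) + f (2 * j + 1)) := by
  induction N with
  | zero => simp
  | succ N ih => rw [mul_add, mul_one, sum_range_succ, sum_range_succ, sum_range_succ, ih, add_assoc]

section Binomial

variable {R : Type*} [CommRing R]

theorem add_pow_eq_sum_range_of_lt (s x : R) {ℓ M : ℕ} (h : ℓ < M) :
    (s + x) ^ ℓ = ∑ m ∈ range M, s ^ m * (ℓ.choose m * x ^ (ℓ - m)) := by
  rw [add_pow]
  refine sum_subset (range_subset_range.2 h) (fun m _ hm => ?_) |>.trans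
    (sum_congr rfl fun m _ => by ring)
  rw [Nat.choose_eq_zero_of_lt (by simpa using hm)]
  simp

theorem pow_mul_choose_mul_pow_sub (x : R) (ℓ m k : ℕ) :
    x ^ k * (ℓ.choose (m + k) * x ^ (ℓ - (m + k))) = ℓ.choose (m + k) * x ^ (ℓ - m) := by
  rcases le_or_gt (m + k) ℓ with h | h
  · rw [show ℓ - m = ℓ - (m + k) + k by omega, pow_add]
    ring
  · simp [Nat.choose_eq_zero_of_lt h]

theorem mul_sub_one_pow_add_mul_add_one_pow (x c : R) {ℓ N : ℕ} (h : ℓ ≤ 2 * N) :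
    x * (x + c) * (x - 1) ^ ℓ - 2 * x ^ 2 * x ^ ℓ + x * (x - c) * (x + 1) ^ ℓ
      = 2 * ∑ j ∈ range N,
          ((ℓ.choose (2 * j + 2) : R) - c * ℓ.choose (2 * j + 1)) * x ^ (ℓ - 2 * j) := by
  -- Indices `2 j + 1` and `2 j + 2` of the binomial expansions both contribute to `x ^ (ℓ - 2 j)`.
  set u : ℕ → R := fun m =>
    ((1 + (-1) ^ m) * x ^ 2 - (1 - (-1) ^ m) * c * x) * (ℓ.choose m * x ^ (ℓ - m)) with hu
  have hexpand : x * (x + c) * (x - 1) ^ ℓ + x * (x - c) * (x + 1) ^ ℓ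
      = ∑ m ∈ range (2 * N + 1), u m := by
    rw [show x - 1 = -1 + x by ring, show x + 1 = 1 + x by ring,
      add_pow_eq_sum_range_of_lt (-1) x (show ℓ < 2 * N + 1 by omega),
      add_pow_eq_sum_range_of_lt 1 x (show ℓ < 2 * N + 1 by omega),
      mul_sum, mul_sum, ← sum_add_distrib]
    exact sum_congr rfl fun m _ => by simp only [hu, one_pow]; ring
  have hpair : ∀ j, u (2 * j + 1) + u (2 * j + 2)
      = 2 * (((ℓ.choose (2 * j + 2) : R) - c * ℓ.choose (2 * j + 1)) * x ^ (ℓ - 2 * j)) := by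
    intro j
    have hodd := pow_mul_choose_mul_pow_sub x ℓ (2 * j) 1
    have heven := pow_mul_choose_mul_pow_sub x ℓ (2 * j) 2
    simp only [hu, pow_succ, pow_mul]
    simp only [pow_one] at hodd heven
    linear_combination (-2 * c) * hodd + 2 * heven
  calc _ = ∑ m ∈ range (2 * N + 1), u m - 2 * x ^ 2 * x ^ ℓ := by rw [← hexpand]; ring
    _ = ∑ j ∈ range N, (u (2 * j + 1) + u (2 * j + 2)) := by
      have hu0 : u 0 = 2 * x ^ 2 * x ^ ℓ := by norm_num [hu]
      rw [sum_range_succ', sum_range_two_mul, hu0, add_sub_cancel_right]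
    _ = _ := by rw [mul_sum]; exact sum_congr rfl fun j _ => hpair j

end Binomial

theorem Amat_mulVec_apply (n : ℕ) (v : ℕ → ℝ) (hv : v 0 = 0) (i : Fin n) :
    (Amat n *ᵥ fun j => v (j + 1)) i
      = ((i : ℕ) + 1 : ℝ) * ((i : ℕ) + 1 + n) / 2 * v i - ((i : ℕ) + 1 : ℝ) ^ 2 * v (i + 1)
        + ((i : ℕ) + 1 : ℝ) * ((i : ℕ) + 1 - n) / 2 * v (i + 2) := by
  obtain ⟨k, hk⟩ := i
  set a : ℝ := (k + 1) * (k + 1 + n) / 2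
  set b : ℝ := (k + 1) * (k + 1 - n) / 2
  set e : ℕ → ℝ := fun j =>
    if k = j then -((k + 1 : ℝ) ^ 2) else if k = j + 1 then a else if j = k + 1 then b else 0
  have hsplit : ∀ j : ℕ, e j * v (j + 1)
      = (if j + 1 = k then a * v k else 0) + (if j = k then -((k + 1 : ℝ) ^ 2) * v (k + 1) else 0)
        + (if j = k + 1 then b * v (k + 2) else 0) := by
    intro j
    simp only [e]
    split_ifs <;> first | omega | (subst_vars; ring)
  -- The boundary neighbours are harmless: the lower one meets `v 0 = 0`, the upper one the
  -- coefficient `b`, which vanishes at `k + 1 = n`.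
  have hlower : ∑ j ∈ range n, (if j + 1 = k then a * v k else 0) = a * v k := by
    rcases k with _ | m
    · simp [hv]
    · simp only [add_left_inj]
      rw [sum_ite_eq', if_pos (mem_range.2 (by omega))]
  have hupper : ∑ j ∈ range n, (if j = k + 1 then b * v (k + 2) else 0) = b * v (k + 2) := by
    rw [sum_ite_eq']
    split_ifs with h
    · rfl
    · have : (n : ℝ) = k + 1 := by exact_mod_cast (show n = k + 1 by rw [mem_range] at h; omega)
      simp [b, this]
  change ∑ j : Fin n, e j * v (j + 1) = _
  rw [Fin.sum_univ_eq_sum_range (fun j => e j * v (j + 1)) n]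
  simp only [hsplit, sum_add_distrib, hlower, hupper, sum_ite_eq', mem_range, if_pos hk]
  ring

theorem Bmat_pow_mulVec_fvec (n ℓ : ℕ) :
    (Bmat n ^ ℓ) *ᵥ fvec n = fun j : Fin n => ((j : ℕ) + 1 : ℝ) ^ ℓ := by
  funext j
  simp [Bmat, fvec, diagonal_pow, mulVec_diagonal]

theorem stmt11_general (n : ℕ) :
    (∀ ℓ : ℕ, 1 ≤ ℓ → ℓ ≤ 2 * n →
      (Amat n).mulVec (((Bmat n) ^ ℓ).mulVec (fvec n))
        = ∑ j ∈ Finset.range ((ℓ - 1) / 2 + 1),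
            ((ℓ.choose (2 * j + 2) : ℝ) - (n : ℝ) * (ℓ.choose (2 * j + 1) : ℝ))
              • ((Bmat n) ^ (ℓ - 2 * j)).mulVec (fvec n))
      ∧ (Amat n).mulVec (fvec n) = (-(((n : ℝ) + 1) / 2)) • evec n := by
  constructor
  · intro ℓ hℓ _
    funext i
    have hpow : (Bmat n ^ ℓ) *ᵥ fvec n = fun j : Fin n => ((j + 1 : ℕ) : ℝ) ^ ℓ := by
      rw [Bmat_pow_mulVec_fvec]; push_cast; rfl
    rw [hpow, Amat_mulVec_apply n (fun k => (k : ℝ) ^ ℓ) (by simp [Nat.one_le_iff_ne_zero.mp hℓ])]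
    simp only [Finset.sum_apply, Pi.smul_apply, Bmat_pow_mulVec_fvec, smul_eq_mul]
    push_cast
    linear_combination (1 / 2 : ℝ) * mul_sub_one_pow_add_mul_add_one_pow ((i : ℕ) + 1 : ℝ) (n : ℝ)
      (show ℓ ≤ 2 * ((ℓ - 1) / 2 + 1) by omega)
  · funext i
    have hfvec : fvec n = fun j : Fin n => if (j + 1 : ℕ) = 0 then 0 else 1 := by
      funext j; simp [fvec]
    rw [hfvec, Amat_mulVec_apply n (fun k => if k = 0 then 0 else 1) rfl]
    rcases i with ⟨_ | k, hk⟩ <;>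
      simp only [Pi.smul_apply, smul_eq_mul, evec, Nat.add_eq_zero_iff, one_ne_zero,
        OfNat.ofNat_ne_zero, and_false, if_true, if_false, Nat.cast_zero, Nat.cast_succ] <;>
      ring

theorem stmt11 (n : ℕ) (hn : 0 < n) :
    (∀ ℓ : ℕ, 1 ≤ ℓ → ℓ ≤ 2 * n →
      (Amat n).mulVec (((Bmat n) ^ ℓ).mulVec (fvec n))
        = ∑ j ∈ Finset.range ((ℓ - 1) / 2 + 1),
            ((ℓ.choose (2 * j + 2) : ℝ) - (n : ℝ) * (ℓ.choose (2 * j + 1) : ℝ))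
              • ((Bmat n) ^ (ℓ - 2 * j)).mulVec (fvec n))
      ∧ (Amat n).mulVec (fvec n) = (-(((n : ℝ) + 1) / 2)) • evec n :=
  stmt11_general n
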